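/- Let G be a bi-directed graph and G̅ an ancestral graph with the same skeleton as G. Then G and G̅ are Markov equivalent (i.e., the m-separation relations of G and G̅ coincide) if and only if G̅ satisfies the boundary containment property. -/

import Mathlib

/-- Possible edge types between an ordered pair of distinct vertices of a
simple mixed graph.  `arrowTo` at `(v, w)` means `v → w`, `arrowFrom` means
`v ← w`, `undir` means `v − w` and `bidir` means `v ↔ w`. -/
inductive EType : Type
  | none | undir | arrowTo | arrowFrom | bidir
deriving DecidableEq

/-- The edge type seen from the reversed ordered pair of vertices. -/
def EType.mirror : EType → EType
  | .none => .none
  | .undir => .undir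
  | .arrowTo => .arrowFrom
  | .arrowFrom => .arrowTo
  | .bidir => .bidir

/-- A simple mixed graph: at most one edge (undirected, directed or
bi-directed) between any two distinct vertices, and no self loops. -/
structure MixedGraph (V : Type) where
  E : V → V → EType
  no_loop : ∀ v, E v v = .none
  symm : ∀ v w, E w v = (E v w).mirror

/-- `(a, b, c)` are three consecutive vertices on the path `p`. -/
def ConsecTriple {V : Type} (p : List V) (a b c : V) : Prop :=
  ∃ l1 l2, p = l1 ++ a :: b :: c :: l2

namespace MixedGraph

variable {V : Type} (G : MixedGraph V)

/-- `v − w` is an edge of `G`. -/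
def Undir (v w : V) : Prop := G.E v w = .undir

/-- `v → w` is an edge of `G`. -/
def Dir (v w : V) : Prop := G.E v w = .arrowTo

/-- `v ↔ w` is an edge of `G`. -/
def Bidir (v w : V) : Prop := G.E v w = .bidir

/-- `v` and `w` are adjacent (joined by some edge). -/
def Adj (v w : V) : Prop := G.E v w ≠ .none

/-- The edge between `a` and `b` has an arrowhead at `b`. -/
def HeadAt (a b : V) : Prop := G.E a b = .arrowTo ∨ G.E a b = .bidir

/-- Closed boundary: `v` together with its adjacent vertices. -/
def Bd (v : V) : Set V := insert v {w | G.Adj v w}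

/-- A set of vertices is complete if all of its pairs of distinct
vertices are adjacent. -/
def Complete (S : Set V) : Prop := ∀ v ∈ S, ∀ w ∈ S, v ≠ w → G.Adj v w

/-- A vertex is simplicial if its closed boundary is complete. -/
def Simplicial (v : V) : Prop := G.Complete (G.Bd v)

/-- `v` is an ancestor of `w`: `v = w` or there is a directed path from
`v` to `w`. -/
def Anc (v w : V) : Prop := Relation.ReflTransGen G.Dir v w

/-- The set of ancestors of vertices in `C`. -/
def anSet (C : Set V) : Set V := {v | ∃ c ∈ C, G.Anc v c}

/-- `G` is an ancestral graph. -/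
def Ancestral : Prop :=
  (∀ v w, G.Dir v w → ¬ G.Anc w v) ∧
  (∀ v w, G.Undir v w → ∀ u, ¬ G.HeadAt u v) ∧
  (∀ v w, G.Bidir v w → ¬ G.Anc v w)

/-- The boundary containment property. -/
def BdContain : Prop :=
  (∀ v w, G.Undir v w → G.Bd v = G.Bd w) ∧
  (∀ v w, G.Dir v w → G.Bd v ⊆ G.Bd w)

/-- `b` is a collider between consecutive neighbours `a` and `c`. -/
def Collider (a b c : V) : Prop := G.HeadAt a b ∧ G.HeadAt c b

/-- A path: a list of distinct vertices, consecutive ones adjacent. -/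
def IsPath (p : List V) : Prop := p.Nodup ∧ p.Chain' G.Adj

/-- `p` is an m-connecting path given `C`: every non-collider on it is
outside `C` and every collider on it is an ancestor of `C`. -/
def IsMConnPath (C : Set V) (p : List V) : Prop :=
  G.IsPath p ∧
  ∀ a b c, ConsecTriple p a b c →
    (G.Collider a b c → b ∈ G.anSet C) ∧ (¬ G.Collider a b c → b ∉ C)

/-- `v` and `w` are m-connected given `C`. -/
def MConn (v w : V) (C : Set V) : Prop :=
  ∃ p, G.IsMConnPath C p ∧ p.head? = some v ∧ p.getLast? = some w

/-- `v` and `w` are m-separated given `C`. -/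
def MSep (v w : V) (C : Set V) : Prop := ¬ G.MConn v w C

/-- A maximal (ancestral) graph: every pair of distinct non-adjacent
vertices is m-separated given some set. -/
def Maximal : Prop :=
  ∀ v w, v ≠ w → ¬ G.Adj v w → ∃ C : Set V, v ∉ C ∧ w ∉ C ∧ G.MSep v w C

/-- `G` is a bi-directed graph. -/
def Bidirected : Prop := ∀ v w, G.E v w = .none ∨ G.E v w = .bidir

/-- `G` is an undirected graph. -/
def UndirectedG : Prop := ∀ v w, G.E v w = .none ∨ G.E v w = .undir

/-- `G` is a directed acyclic graph. -/
def IsDAG : Prop :=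
  (∀ v w, G.E v w = .none ∨ G.E v w = .arrowTo ∨ G.E v w = .arrowFrom) ∧
  (∀ v w, G.Dir v w → ¬ G.Anc w v)

/-- `G` and `H` have the same skeleton. -/
def SameSkeleton (H : MixedGraph V) : Prop := ∀ v w, G.Adj v w ↔ H.Adj v w

/-- `G` and `H` are Markov equivalent: their m-separation relations
coincide. -/
def MarkovEquiv (H : MixedGraph V) : Prop :=
  ∀ v w (C : Set V), v ≠ w → v ∉ C → w ∉ C → (G.MSep v w C ↔ H.MSep v w C)

open Classical in
/-- The edge map obtained from `G` by dropping all arrowheads at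
simplicial vertices. -/
noncomputable def dropE (v w : V) : EType :=
  match G.E v w with
  | .none => .none
  | .undir => .undir
  | .arrowTo => if G.Simplicial w then .undir else .arrowTo
  | .arrowFrom => if G.Simplicial v then .undir else .arrowFrom
  | .bidir =>
      if G.Simplicial v then (if G.Simplicial w then .undir else .arrowTo)
      else (if G.Simplicial w then .arrowFrom else .bidir)

/-- The graph obtained from `G` by dropping all arrowheads at simplicial
vertices; for a bi-directed graph `G` this is the simplicial graph `Gˢ`. -/
noncomputable def drop : MixedGraph V where
  E := G.dropE
  no_loop v := by simp [dropE, G.no_loop]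
  symm v w := by
    unfold dropE
    rw [G.symm v w]
    cases h : G.E v w <;>
      simp only [EType.mirror] <;> split_ifs <;> simp_all [EType.mirror]

open Classical in
/-- The edge map of the minimally oriented graph `G^min_<`: starting from
the simplicial graph, each bi-directed edge `v ↔ w` with `Bd v ⊆ Bd w`
and `v < w` is replaced by `v → w`. -/
noncomputable def gminE [LinearOrder V] (v w : V) : EType :=
  match G.dropE v w with
  | .bidir =>
      if G.Bd v ⊆ G.Bd w ∧ v < w then .arrowTo
      else if G.Bd w ⊆ G.Bd v ∧ w < v then .arrowFrom
      else .bidir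
  | e => e

/-- The graph `G^min_<` produced by Algorithm 4.2 from `G` and the total
order on `V`. -/
noncomputable def gmin [LinearOrder V] : MixedGraph V where
  E := G.gminE
  no_loop v := by
    have h := G.drop.no_loop v
    simp only [drop] at h
    simp [gminE, h]
  symm v w := by
    have h := G.drop.symm v w
    simp only [drop] at h
    unfold gminE
    rw [h]
    cases hE : G.dropE v w <;> simp only [EType.mirror]
    case bidir =>
      by_cases c1 : G.Bd v ⊆ G.Bd w ∧ v < w
      · have c2 : ¬ (G.Bd w ⊆ G.Bd v ∧ w < v) := fun h' => lt_asymm c1.2 h'.2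
        simp [c1, c2, EType.mirror]
      · by_cases c2 : G.Bd w ⊆ G.Bd v ∧ w < v
        · simp [c1, c2, EType.mirror]
        · simp [c1, c2, EType.mirror]

/-- Total number of arrowheads of `G`: the number of directed edges plus
twice the number of bi-directed edges. -/
noncomputable def arr : ℕ :=
  {p : V × V | G.Dir p.1 p.2}.ncard + {p : V × V | G.Bidir p.1 p.2}.ncard

end MixedGraph

/-- `Gm` is a minimally oriented graph for `G`. -/
def MinOriented {V : Type} (G Gm : MixedGraph V) : Prop :=
  Gm.Ancestral ∧ Gm.Maximal ∧ G.MarkovEquiv Gm ∧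
  ∀ H : MixedGraph V, H.Ancestral → H.Maximal → G.MarkovEquiv H → Gm.arr ≤ H.arr

/-!
Both m-separation relations reduce to reachability in the common skeleton. Write `v ⇝_C w` if
the skeleton has a walk from `v` to `w` whose inner vertices lie in `C`. Under boundary
containment a tail at `b` on an edge `a b` gives `Bd b ⊆ Bd a`. Hence in an ancestral graph with
this property a non-collider on a path can be short-cut, and a collider `b ∈ an(C)` can be
replaced by the vertex `c ∈ C` it is an ancestor of, since `Bd b ⊆ Bd c`; so `v` and `w` are
m-connected given `C` iff `v ⇝_C w`. A bi-directed graph is such a graph, and `⇝_C` only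
depends on the skeleton. Conversely, if the edge `a b` of `G̅` has a tail at `b` but some
`u ∈ Bd b` lies outside `Bd a`, the path `u, b, a` m-connects `u` and `a` given `∅` in `G̅`,
whereas in `G` the non-adjacent `u` and `a` are m-separated by `∅`.
-/

lemma consecTriple_cons {V : Type} {u a b c : V} {l : List V} :
    ConsecTriple (u :: l) a b c ↔ (u = a ∧ ∃ l', l = b :: c :: l') ∨ ConsecTriple l a b c := by
  constructor
  · rintro ⟨_ | ⟨y, l₁⟩, l₂, h⟩
    · simp only [List.nil_append, List.cons.injEq] at h
      exact Or.inl ⟨h.1, l₂, h.2⟩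
    · simp only [List.cons_append, List.cons.injEq] at h
      exact Or.inr ⟨l₁, l₂, h.2⟩
  · rintro (⟨rfl, l₂, rfl⟩ | ⟨l₁, l₂, rfl⟩)
    exacts [⟨[], l₂, rfl⟩, ⟨u :: l₁, l₂, rfl⟩]

lemma consecTriple_three_iff {V : Type} {u v w a b c : V} :
    ConsecTriple [u, v, w] a b c ↔ a = u ∧ b = v ∧ c = w := by
  refine ⟨fun h => ?_, by rintro ⟨rfl, rfl, rfl⟩; exact ⟨[], [], rfl⟩⟩
  obtain ⟨l₁, l₂, h⟩ := h
  have hlen := congrArg List.length h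
  obtain rfl : l₁ = [] := List.eq_nil_of_length_eq_zero (by simp at hlen; omega)
  simp_all

lemma ConsecTriple.mid_ne_of_head? {V : Type} {p : List V} {a b c v : V}
    (h : ConsecTriple p a b c) (hp : p.Nodup) (hv : p.head? = some v) : b ≠ v := by
  rintro rfl
  obtain ⟨_ | ⟨x, l₁⟩, l₂, rfl⟩ := h <;> simp_all

lemma ConsecTriple.mid_ne_of_getLast? {V : Type} {p : List V} {a b c w : V}
    (h : ConsecTriple p a b c) (hp : p.Nodup) (hw : p.getLast? = some w) : b ≠ w := by
  obtain ⟨l₁, l₂, rfl⟩ := h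
  refine ConsecTriple.mid_ne_of_head? (a := c) (c := a) ⟨l₂.reverse, l₁.reverse, by simp⟩
    (List.nodup_reverse.mpr hp) (by rwa [List.head?_reverse])

lemma ConsecTriple.left_ne_right {V : Type} {p : List V} {a b c : V}
    (h : ConsecTriple p a b c) (hp : p.Nodup) : a ≠ c := by
  rintro rfl
  obtain ⟨l₁, l₂, rfl⟩ := h
  simpa using (List.nodup_append.mp hp).2.1

namespace MixedGraph

variable {V : Type} {G H : MixedGraph V} {C : Set V} {a b c d u v w x : V}

lemma adj_comm : G.Adj v w ↔ G.Adj w v := by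
  unfold Adj
  rw [G.symm v w]
  cases G.E v w <;> simp [EType.mirror]

lemma Adj.symm (h : G.Adj v w) : G.Adj w v := adj_comm.mp h

lemma Adj.ne (h : G.Adj v w) : v ≠ w := by
  rintro rfl
  exact h (G.no_loop v)

lemma mem_bd : u ∈ G.Bd v ↔ u = v ∨ G.Adj v u := Iff.rfl

lemma self_mem_bd (v : V) : v ∈ G.Bd v := Or.inl rfl

lemma Adj.mem_bd (h : G.Adj v w) : w ∈ G.Bd v := Or.inr h

lemma mem_bd_comm : u ∈ G.Bd v ↔ v ∈ G.Bd u := by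
  simp only [mem_bd, eq_comm, adj_comm]

lemma Undir.not_headAt (h : G.Undir v w) : ¬ G.HeadAt w v := by
  simp [HeadAt, G.symm v w, show G.E v w = _ from h, EType.mirror]

lemma Dir.not_headAt (h : G.Dir v w) : ¬ G.HeadAt w v := by
  simp [HeadAt, G.symm v w, show G.E v w = _ from h, EType.mirror]

lemma undir_or_dir_of_not_headAt (h : G.Adj a b) (hn : ¬ G.HeadAt a b) :
    G.Undir b a ∨ G.Dir b a := by
  simp only [Undir, Dir, G.symm a b]
  cases hE : G.E a b <;> simp_all [EType.mirror, HeadAt, Adj]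

lemma Undir.adj (h : G.Undir v w) : G.Adj v w := by
  simp [Adj, show G.E v w = _ from h]

lemma Dir.adj (h : G.Dir v w) : G.Adj v w := by
  simp [Adj, show G.E v w = _ from h]

lemma Undir.symm (h : G.Undir v w) : G.Undir w v := by
  simp [Undir, G.symm v w, show G.E v w = _ from h, EType.mirror]

lemma bdContain_iff :
    G.BdContain ↔ ∀ a b, G.Adj a b → ¬ G.HeadAt a b → G.Bd b ⊆ G.Bd a := by
  refine ⟨fun hB a b hab hn => ?_, fun h => ⟨fun v w hvw => ?_, fun v w hvw => ?_⟩⟩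
  · rcases undir_or_dir_of_not_headAt hab hn with hba | hba
    exacts [(hB.1 b a hba).le, hB.2 b a hba]
  · exact (h w v hvw.adj.symm hvw.not_headAt).antisymm (h v w hvw.adj hvw.symm.not_headAt)
  · exact h w v hvw.adj.symm hvw.not_headAt

lemma mem_bd_of_not_collider (hB : G.BdContain) (hab : G.Adj a b) (hbc : G.Adj b c)
    (hn : ¬ G.Collider a b c) : c ∈ G.Bd a := by
  rcases not_and_or.mp hn with ha | hc
  · exact bdContain_iff.mp hB a b hab ha hbc.mem_bd
  · exact mem_bd_comm.mp (bdContain_iff.mp hB c b hbc.symm hc hab.symm.mem_bd)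

lemma Anc.bd_subset (hB : G.BdContain) (h : G.Anc v w) : G.Bd v ⊆ G.Bd w := by
  induction h with
  | refl => exact subset_rfl
  | tail _ hdir ih => exact ih.trans (hB.2 _ _ hdir)

lemma Ancestral.dir_of_not_headAt (hA : G.Ancestral) (hbc : G.Adj b c)
    (hn : ¬ G.HeadAt b c) (hd : G.HeadAt d c) : G.Dir c b := by
  rcases undir_or_dir_of_not_headAt hbc hn with hcb | hcb
  · exact absurd hd (hA.2.1 c b hcb d)
  · exact hcb

/-- Otherwise `c → b → x`, and the arrowhead of `x *→ c` contradicts ancestrality. -/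
lemma Ancestral.not_collider_shortcut (hA : G.Ancestral) (hxb : G.Adj x b) (hbc : G.Adj b c)
    (hxbc : ¬ G.Collider x b c) (hbcd : ¬ G.Collider b c d) : ¬ G.Collider x c d := by
  rintro ⟨hxc, hdc⟩
  have hcb : G.Dir c b := hA.dir_of_not_headAt hbc (fun h => hbcd ⟨h, hdc⟩) hdc
  have hbx : G.Dir b x :=
    hA.dir_of_not_headAt hxb (fun h => hxbc ⟨h, Or.inl hcb⟩) (Or.inl hcb)
  have hcx : G.Anc c x := .head hcb (.single hbx)
  rcases hxc with hxc | hxc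
  · exact hA.1 x c hxc hcx
  · exact hA.2.2 c x (by simp [Bidir, G.symm x c, show G.E x c = _ from hxc, EType.mirror]) hcx

/-- Walks in the skeleton from `v` to `w` with all inner vertices in `C`: every step but the
last enters `C`, and the last step is encoded by `w ∈ G.Bd u`. -/
def ReachVia (G : MixedGraph V) (C : Set V) (v w : V) : Prop :=
  ∃ u, Relation.ReflTransGen (fun a b => G.Adj a b ∧ b ∈ C) v u ∧ w ∈ G.Bd u

lemma reachVia_of_mem_bd (h : w ∈ G.Bd v) : G.ReachVia C v w := ⟨v, .refl, h⟩

lemma reflTransGen_of_mem_bd (h : w ∈ G.Bd v) (hw : w ∈ C) :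
    Relation.ReflTransGen (fun a b => G.Adj a b ∧ b ∈ C) v w := by
  rcases h with rfl | h
  · exact .refl
  · exact .single ⟨h, hw⟩

lemma ReachVia.trans (h₁ : G.ReachVia C v u) (hu : u ∈ C) (h₂ : G.ReachVia C u w) :
    G.ReachVia C v w := by
  obtain ⟨x, hvx, hux⟩ := h₁
  obtain ⟨y, huy, hwy⟩ := h₂
  exact ⟨y, hvx.trans ((reflTransGen_of_mem_bd hux hu).trans huy), hwy⟩

lemma ReachVia.of_bd_subset (h : G.ReachVia C u w) (hsub : G.Bd u ⊆ G.Bd v) :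
    G.ReachVia C v w := by
  obtain ⟨x, hux, hwx⟩ := h
  rcases hux.cases_head with rfl | ⟨y, ⟨huy, hyC⟩, hyx⟩
  · exact reachVia_of_mem_bd (hsub hwx)
  · exact ⟨x, (reflTransGen_of_mem_bd (hsub huy.mem_bd) hyC).trans hyx, hwx⟩

lemma ReachVia.of_mem_anSet (hB : G.BdContain) (h : G.ReachVia C b w) (hb : b ∈ G.anSet C)
    (hvb : v ∈ G.Bd b) : G.ReachVia C v w := by
  obtain ⟨c, hcC, hbc⟩ := hb
  have hsub := hbc.bd_subset hB
  exact (reachVia_of_mem_bd (mem_bd_comm.mp (hsub hvb))).trans hcC (h.of_bd_subset hsub)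

lemma reachVia_empty_iff : G.ReachVia ∅ v w ↔ w ∈ G.Bd v := by
  refine ⟨fun ⟨u, hvu, hwu⟩ => ?_, reachVia_of_mem_bd⟩
  rcases hvu.cases_head with rfl | ⟨_, ⟨_, h⟩, _⟩
  · exact hwu
  · exact absurd h (Set.notMem_empty _)

lemma SameSkeleton.bd_eq (hsk : G.SameSkeleton H) (v : V) : G.Bd v = H.Bd v := by
  ext u
  simp only [mem_bd, hsk v u]

lemma SameSkeleton.reachVia_iff (hsk : G.SameSkeleton H) :
    G.ReachVia C v w ↔ H.ReachVia C v w := by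
  simp only [ReachVia, show ∀ a b, G.Adj a b ↔ H.Adj a b from hsk, hsk.bd_eq]

lemma IsPath.shortcut {l₁ l₂ : List V} (h : G.IsPath (l₁ ++ a :: b :: c :: l₂))
    (hac : G.Adj a c) : G.IsPath (l₁ ++ a :: c :: l₂) := by
  refine ⟨h.1.sublist (((List.sublist_cons_self b _).cons_cons a).append_left l₁), ?_⟩
  have h₂ := List.isChain_append.mp h.2
  refine List.isChain_append.mpr ⟨h₂.1, ?_, fun y hy z hz => h₂.2.2 y hy z (by simpa using hz)⟩
  exact List.isChain_cons_cons.mpr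
    ⟨hac, (List.isChain_cons_cons.mp (List.isChain_cons_cons.mp h₂.2.1).2).2⟩

lemma IsMConnPath.tail {l : List V} (h : G.IsMConnPath C (u :: l)) : G.IsMConnPath C l :=
  ⟨⟨h.1.1.of_cons, h.1.2.tail⟩, fun a b c ht => h.2 a b c (consecTriple_cons.mpr (Or.inr ht))⟩

lemma IsMConnPath.shortcut (hA : G.Ancestral) {l : List V}
    (h : G.IsMConnPath C (x :: b :: c :: l)) (hxc : G.Adj x c) (hxbc : ¬ G.Collider x b c)
    (hc : c ∉ G.anSet C) : G.IsMConnPath C (x :: c :: l) := by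
  have hxb : G.Adj x b := (List.isChain_cons_cons.mp h.1.2).1
  have hbc : G.Adj b c := (List.isChain_cons_cons.mp h.tail.1.2).1
  refine ⟨⟨h.1.1.sublist ((List.sublist_cons_self b _).cons_cons x),
    List.isChain_cons_cons.mpr ⟨hxc, h.tail.tail.1.2⟩⟩, fun a' b' c' ht => ?_⟩
  rcases consecTriple_cons.mp ht with ⟨rfl, l', hl⟩ | ht
  · obtain ⟨rfl, rfl⟩ := List.cons_eq_cons.mp hl
    refine ⟨fun hcol => ?_, fun _ hcC => hc ⟨c, hcC, .refl⟩⟩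
    by_contra hc'
    refine hA.not_collider_shortcut hxb hbc hxbc (fun hbcd => hc' ?_) hcol
    exact (h.2 b c c' ⟨[x], l', rfl⟩).1 hbcd
  · exact h.tail.tail.2 a' b' c' ht

lemma ReachVia.exists_path (h : G.ReachVia C v w) :
    ∃ p, G.IsPath p ∧ p.head? = some v ∧ p.getLast? = some w ∧
      ∀ x ∈ p, x = v ∨ x = w ∨ x ∈ C := by
  obtain ⟨u, hvu, hwu⟩ := h
  induction hvu using Relation.ReflTransGen.head_induction_on with
  | refl =>
    rcases hwu with rfl | huw
    · exact ⟨[w], ⟨List.nodup_singleton w, List.isChain_singleton w⟩, rfl, rfl, by simp⟩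
    · exact ⟨[u, w], ⟨by simp [huw.ne], List.isChain_pair.mpr huw⟩, rfl, rfl, by simp⟩
  | @head a y hay _ ih =>
    obtain ⟨hay, hyC⟩ := hay
    obtain ⟨_ | ⟨y', q⟩, hq, hqv, hqw, hqC⟩ := ih
    · simp at hqv
    obtain rfl : y = y' := (by simpa using hqv : y' = y).symm
    have hqC' : ∀ x ∈ y :: q, x = a ∨ x = w ∨ x ∈ C := fun x hx => by
      rcases hqC x hx with rfl | h | h
      exacts [Or.inr (Or.inr hyC), Or.inr (Or.inl h), Or.inr (Or.inr h)]
    by_cases ha : a ∈ y :: q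
    · obtain ⟨s, t, hst⟩ := List.append_of_mem ha
      rw [hst] at hq hqw hqC'
      refine ⟨a :: t, ⟨hq.1.sublist (List.sublist_append_right _ _),
        hq.2.suffix (List.suffix_append _ _)⟩, rfl, ?_, fun x hx => hqC' x (by simp [hx])⟩
      rwa [List.getLast?_append_of_ne_nil _ (List.cons_ne_nil _ _)] at hqw
    · refine ⟨a :: y :: q, ⟨List.nodup_cons.mpr ⟨ha, hq.1⟩,
        List.isChain_cons_cons.mpr ⟨hay, hq.2⟩⟩, rfl, by simpa using hqw, fun x hx => ?_⟩
      rcases List.mem_cons.mp hx with rfl | hx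
      exacts [Or.inl rfl, hqC' x hx]

/-- Every non-collider can be short-cut (`mem_bd_of_not_collider`), so a shortest such path
m-connects. -/
theorem mconn_of_isPath (hB : G.BdContain) {p : List V} (hp : G.IsPath p)
    (hv : p.head? = some v) (hw : p.getLast? = some w) (hC : ∀ x ∈ p, x = v ∨ x = w ∨ x ∈ C) :
    G.MConn v w C := by
  by_cases hcoll : ∀ a b c, ConsecTriple p a b c → G.Collider a b c
  · refine ⟨p, ⟨hp, fun a b c ht => ⟨fun _ => ?_, fun hn => absurd (hcoll a b c ht) hn⟩⟩, hv, hw⟩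
    have hb : b ∈ p := by
      obtain ⟨l₁, l₂, rfl⟩ := ht
      simp
    rcases hC b hb with h | h | h
    exacts [absurd h (ht.mid_ne_of_head? hp.1 hv), absurd h (ht.mid_ne_of_getLast? hp.1 hw),
      ⟨b, h, .refl⟩]
  · push Not at hcoll
    obtain ⟨a, b, c, ht, hn⟩ := hcoll
    have hne := ht.left_ne_right hp.1
    obtain ⟨l₁, l₂, rfl⟩ := ht
    have hchain := List.isChain_cons_cons.mp (hp.2.suffix (List.suffix_append l₁ _))
    have hab := hchain.1
    have hbc := (List.isChain_cons_cons.mp hchain.2).1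
    have hac : G.Adj a c := (mem_bd_of_not_collider hB hab hbc hn).resolve_left hne.symm
    exact mconn_of_isPath hB (hp.shortcut hac) (by cases l₁ <;> simpa using hv)
      (by simpa using hw) (fun x hx => hC x (by simp at hx ⊢; tauto))
termination_by p.length
decreasing_by simp_all

theorem IsMConnPath.reachVia (hA : G.Ancestral) (hB : G.BdContain) :
    ∀ {p : List V} {v w : V}, G.IsMConnPath C p → p.head? = some v → p.getLast? = some w →
      G.ReachVia C v w
  | [], _, _, _, hv, _ => by simp at hv
  | [x], v, w, _, hv, hw => by
    obtain ⟨rfl, rfl⟩ : x = v ∧ x = w := by simp_all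
    exact reachVia_of_mem_bd (self_mem_bd x)
  | [x, b], v, w, hp, hv, hw => by
    obtain ⟨rfl, rfl⟩ : x = v ∧ b = w := by simp_all
    exact reachVia_of_mem_bd (List.isChain_pair.mp hp.1.2).mem_bd
  | x :: b :: c :: l, v, w, hp, hv, hw => by
    obtain rfl : x = v := by simpa using hv
    have hxb : G.Adj x b := (List.isChain_cons_cons.mp hp.1.2).1
    by_cases hb : b ∈ G.anSet C
    · exact (hp.tail.reachVia hA hB rfl (by simpa using hw)).of_mem_anSet hB hb
        (mem_bd_comm.mp hxb.mem_bd)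
    have hxbc : ¬ G.Collider x b c := fun h => hb ((hp.2 x b c ⟨[], l, rfl⟩).1 h)
    have hbc : G.Adj b c := (List.isChain_cons_cons.mp hp.tail.1.2).1
    have hxc : G.Adj x c := (mem_bd_of_not_collider hB hxb hbc hxbc).resolve_left
      (ConsecTriple.left_ne_right ⟨[], l, rfl⟩ hp.1.1).symm
    by_cases hc : c ∈ G.anSet C
    · exact (hp.tail.tail.reachVia hA hB rfl (by simpa using hw)).of_mem_anSet hB hc
        (mem_bd_comm.mp hxc.mem_bd)
    · exact (hp.shortcut hA hxc hxbc hc).reachVia hA hB rfl (by simpa using hw)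
termination_by p => p.length

theorem mconn_iff_reachVia (hA : G.Ancestral) (hB : G.BdContain) :
    G.MConn v w C ↔ G.ReachVia C v w := by
  refine ⟨fun ⟨_, hp, hv, hw⟩ => hp.reachVia hA hB hv hw, fun h => ?_⟩
  obtain ⟨p, hp, hv, hw, hC⟩ := h.exists_path
  exact mconn_of_isPath hB hp hv hw hC

lemma Bidirected.not_dir (hG : G.Bidirected) : ¬ G.Dir v w := by
  rcases hG v w with h | h <;> simp [Dir, h]

lemma Bidirected.not_undir (hG : G.Bidirected) : ¬ G.Undir v w := by
  rcases hG v w with h | h <;> simp [Undir, h]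

lemma Bidirected.ancestral (hG : G.Bidirected) : G.Ancestral := by
  refine ⟨fun _ _ h => absurd h hG.not_dir, fun _ _ h => absurd h hG.not_undir,
    fun v w hvw hanc => ?_⟩
  rcases hanc.cases_head with rfl | ⟨_, h, _⟩
  · simp [Bidir, G.no_loop] at hvw
  · exact hG.not_dir h

lemma Bidirected.bdContain (hG : G.Bidirected) : G.BdContain :=
  ⟨fun _ _ h => absurd h hG.not_undir, fun _ _ h => absurd h hG.not_dir⟩

lemma MarkovEquiv.bd_subset_of_not_headAt (hG : G.Bidirected) (hsk : G.SameSkeleton H)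
    (hME : G.MarkovEquiv H) (hab : H.Adj a b) (hn : ¬ H.HeadAt a b) : H.Bd b ⊆ H.Bd a := by
  intro u hu
  by_contra hua
  have hua' : u ≠ a := by rintro rfl; exact hua (self_mem_bd u)
  have hub : u ≠ b := by rintro rfl; exact hua hab.mem_bd
  have hbu : H.Adj b u := (mem_bd.mp hu).resolve_left hub
  have hconn : H.MConn u a ∅ := by
    refine ⟨[u, b, a], ⟨⟨by simp [hua', hub, hab.ne.symm], ?_⟩, fun x y z ht => ?_⟩, rfl, rfl⟩
    · exact List.isChain_cons_cons.mpr ⟨hbu.symm, List.isChain_pair.mpr hab.symm⟩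
    · obtain ⟨rfl, rfl, rfl⟩ := consecTriple_three_iff.mp ht
      exact ⟨fun hcol => absurd hcol.2 hn, fun _ => Set.notMem_empty _⟩
  have hsep : G.MSep u a ∅ := by
    rw [MSep, mconn_iff_reachVia hG.ancestral hG.bdContain, reachVia_empty_iff, hsk.bd_eq]
    exact fun h => hua (mem_bd_comm.mp h)
  exact (hME u a ∅ hua' (Set.notMem_empty u) (Set.notMem_empty a)).mp hsep hconn

end MixedGraph

/-- An ancestral graph with the same skeleton as a
bi-directed graph `G` is Markov equivalent to `G` iff it has the
boundary containment property. -/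
theorem stmt6 {V : Type} (G Gb : MixedGraph V) (hG : G.Bidirected)
    (hGb : Gb.Ancestral) (hsk : G.SameSkeleton Gb) :
    G.MarkovEquiv Gb ↔ Gb.BdContain := by
  refine ⟨fun hME => ?_, fun hB v w C _ _ _ => ?_⟩
  · exact MixedGraph.bdContain_iff.mpr fun a b hab hn =>
      hME.bd_subset_of_not_headAt hG hsk hab hn
  · simp only [MixedGraph.MSep, MixedGraph.mconn_iff_reachVia hG.ancestral hG.bdContain,
      MixedGraph.mconn_iff_reachVia hGb hB, hsk.reachVia_iff]
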